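/- arXiv:1612.07623 — 3 statements merged into one kernel-verified Lean document; each statement's English description precedes it below -/
import Mathlib

section
/- Let I ⊂ ℝ be an open interval, K ∈ ℝ, N ∈ (1,∞), and let h : I → ℝ be a positive differentiable function whose derivative is locally absolutely continuous on I (so that h″ exists a.e. on I). If for Lebesgue-a.e. x ∈ I: (log h)″(x) + ((log h)′(x))²/(N−1) ≤ −K, then: (i) if K > 0 the length of I is at most π·√((N−1)/K); and (ii) h is a CD(K,N) density on I. -/
/-!
With `α = 1 / (N - 1)` and `κ = K / (N - 1)`, the hypothesis on `log h` says that `g = h ^ α`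
satisfies `g'' + κ g ≤ 0` almost everywhere. Sturm comparison: the Wronskian of `g` with a
nonnegative solution `c` of `c'' + κ c = 0` is nonincreasing. Comparing `g` with
`sin (√κ (x - a))` bounds the length of `I` by `π / √κ`; comparing it on `[x₀, m]` and `[m, x₁]`,
`m = t x₁ + (1 - t) x₀`, with the generalized sines `sinK κ` vanishing at `x₀` and at `x₁` gives
`sinK κ (t θ) g x₁ + sinK κ ((1 - t) θ) g x₀ ≤ sinK κ θ g m` for `θ = |x₁ - x₀|`, which is the
`CD(K, N)` inequality.
-/

/-- The distortion coefficients `σ^{(t)}_{K,𝒩}(θ)`, valued in `[0,∞]`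
(the value is `+∞` when `K > 0` and `θ·√(K/𝒩) ≥ π`). -/
noncomputable def sigmaCoeff (K Np t θ : ℝ) : ENNReal :=
  if θ = 0 then ENNReal.ofReal t
  else if 0 < K then
    if θ * Real.sqrt (K / Np) < Real.pi then
      ENNReal.ofReal (Real.sin (t * (θ * Real.sqrt (K / Np))) / Real.sin (θ * Real.sqrt (K / Np)))
    else ⊤
  else if K = 0 then ENNReal.ofReal t
  else
    ENNReal.ofReal
      (Real.sinh (t * (θ * Real.sqrt (-K / Np))) / Real.sinh (θ * Real.sqrt (-K / Np)))

/-- `h` is a `CD(K,N)` density on the (interval) `I ⊆ ℝ`: it is nonnegative on `I` and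
`h(t·x₁+(1-t)·x₀)^{1/(N-1)} ≥ σ^{(t)}_{K,N-1}(|x₁-x₀|)·h(x₁)^{1/(N-1)}
  + σ^{(1-t)}_{K,N-1}(|x₁-x₀|)·h(x₀)^{1/(N-1)}` for all `x₀,x₁ ∈ I`, `t ∈ [0,1]`. -/
def IsCDDensity (K N : ℝ) (h : ℝ → ℝ) (I : Set ℝ) : Prop :=
  (∀ x ∈ I, 0 ≤ h x) ∧
  ∀ x₀ ∈ I, ∀ x₁ ∈ I, ∀ t ∈ Set.Icc (0:ℝ) 1,
    sigmaCoeff K (N - 1) t |x₁ - x₀| * ENNReal.ofReal (h x₁ ^ (1 / (N - 1)))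
        + sigmaCoeff K (N - 1) (1 - t) |x₁ - x₀| * ENNReal.ofReal (h x₀ ^ (1 / (N - 1)))
      ≤ ENNReal.ofReal (h (t * x₁ + (1 - t) * x₀) ^ (1 / (N - 1)))

open MeasureTheory Set Filter Real

namespace AbsolutelyContinuousOnInterval

theorem congr {f g : ℝ → ℝ} {a b : ℝ} (hf : AbsolutelyContinuousOnInterval f a b)
    (hfg : EqOn f g (uIcc a b)) : AbsolutelyContinuousOnInterval g a b := by
  refine hf.congr' (eventually_inf_principal.2 (Eventually.of_forall fun E hE => ?_))
  exact Finset.sum_congr rfl fun i hi => by rw [hfg (hE.1 i hi).1, hfg (hE.1 i hi).2]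

theorem of_eq_add_integral {f f' : ℝ → ℝ} {a b : ℝ} (hf' : IntervalIntegrable f' volume a b)
    (hf : ∀ x ∈ uIcc a b, f x = f a + ∫ t in a..x, f' t) :
    AbsolutelyContinuousOnInterval f a b :=
  ((contDiffOn_const (c := f a)).absolutelyContinuousOnInterval.add
    (hf'.absolutelyContinuousOnInterval_intervalIntegral left_mem_uIcc)).congr
    fun x hx => (hf x hx).symm

theorem of_hasDerivAt {f f' : ℝ → ℝ} {a b : ℝ} (hf : ∀ x ∈ uIcc a b, HasDerivAt f (f' x) x)
    (hf' : IntervalIntegrable f' volume a b) : AbsolutelyContinuousOnInterval f a b :=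
  of_eq_add_integral hf' fun x hx => by
    rw [intervalIntegral.integral_eq_sub_of_hasDerivAt
      (fun y hy => hf y (uIcc_subset_uIcc_left hx hy)) (hf'.mono_set (uIcc_subset_uIcc_left hx))]
    ring

theorem le_of_ae_deriv_nonpos {f : ℝ → ℝ} {a b : ℝ} (hf : AbsolutelyContinuousOnInterval f a b)
    (hab : a ≤ b) (hf' : ∀ᵐ x, x ∈ Icc a b → deriv f x ≤ 0) : f b ≤ f a := by
  have hint : 0 ≤ ∫ x in a..b, -deriv f x := by
    refine intervalIntegral.integral_nonneg_of_ae_restrict hab ?_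
    filter_upwards [ae_restrict_mem measurableSet_Icc, ae_restrict_of_ae hf'] with x hx hx'
    simpa using hx' hx
  rw [intervalIntegral.integral_neg, hf.integral_deriv_eq_sub] at hint
  linarith

end AbsolutelyContinuousOnInterval

/-- The solution of `s'' + κ s = 0`, `s 0 = 0`, `s' 0 = 1`. -/
noncomputable def sinK (κ r : ℝ) : ℝ :=
  if 0 < κ then sin (√κ * r) / √κ else if κ = 0 then r else sinh (√(-κ) * r) / √(-κ)

noncomputable def cosK (κ r : ℝ) : ℝ :=
  if 0 < κ then cos (√κ * r) else if κ = 0 then 1 else cosh (√(-κ) * r)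

theorem hasDerivAt_sinK (κ r : ℝ) : HasDerivAt (sinK κ) (cosK κ r) r := by
  unfold sinK cosK
  split_ifs with hpos hzero
  · have hs : √κ ≠ 0 := (sqrt_pos.2 hpos).ne'
    refine (((hasDerivAt_id' r).const_mul √κ).sin.div_const √κ).congr_deriv ?_
    field_simp
  · exact hasDerivAt_id r
  · have hs : √(-κ) ≠ 0 := (sqrt_pos.2 (by grind)).ne'
    refine (((hasDerivAt_id' r).const_mul √(-κ)).sinh.div_const √(-κ)).congr_deriv ?_
    field_simp

theorem hasDerivAt_cosK (κ r : ℝ) : HasDerivAt (cosK κ) (-(κ * sinK κ r)) r := by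
  unfold sinK cosK
  split_ifs with hpos hzero
  · have hs : √κ ≠ 0 := (sqrt_pos.2 hpos).ne'
    refine ((hasDerivAt_id' r).const_mul √κ).cos.congr_deriv ?_
    field_simp
    rw [sq_sqrt hpos.le]; ring
  · simpa [hzero] using hasDerivAt_const r (1 : ℝ)
  · have hκ : 0 ≤ -κ := by grind
    have hs : √(-κ) ≠ 0 := (sqrt_pos.2 (by grind)).ne'
    refine ((hasDerivAt_id' r).const_mul √(-κ)).cosh.congr_deriv ?_
    field_simp
    rw [sq_sqrt hκ]; ring

@[simp] theorem sinK_zero (κ : ℝ) : sinK κ 0 = 0 := by simp [sinK]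

@[simp] theorem cosK_zero (κ : ℝ) : cosK κ 0 = 1 := by simp [cosK]

theorem sinK_add (κ p q : ℝ) : sinK κ (p + q) = sinK κ p * cosK κ q + cosK κ p * sinK κ q := by
  unfold sinK cosK
  split_ifs
  · rw [mul_add, sin_add]; ring
  · ring
  · rw [mul_add, sinh_add]; ring

/-- For `κ ≤ 0` the hypothesis `√κ * r ≤ π` holds trivially, since then `√κ = 0`. -/
theorem sinK_nonneg {κ r : ℝ} (hr : 0 ≤ r) (hrπ : √κ * r ≤ π) : 0 ≤ sinK κ r := by
  unfold sinK
  split_ifs with hpos hzero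
  · exact div_nonneg (sin_nonneg_of_nonneg_of_le_pi (by positivity) hrπ) (sqrt_nonneg _)
  · exact hr
  · exact div_nonneg (sinh_nonneg_iff.2 (by positivity)) (sqrt_nonneg _)

theorem sinK_pos {κ r : ℝ} (hr : 0 < r) (hrπ : √κ * r < π) : 0 < sinK κ r := by
  unfold sinK
  split_ifs with hpos hzero
  · exact div_pos (sin_pos_of_pos_of_lt_pi (by positivity) hrπ) (sqrt_pos.2 hpos)
  · exact hr
  · have : 0 < √(-κ) := sqrt_pos.2 (by grind)
    exact div_pos (sinh_pos_iff.2 (by positivity)) this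

theorem sinK_pi_div_sqrt {κ : ℝ} (hκ : 0 < κ) : sinK κ (π / √κ) = 0 := by
  have : √κ ≠ 0 := (sqrt_pos.2 hκ).ne'
  simp [sinK, hκ, mul_div_cancel₀ _ this]

theorem cosK_pi_div_sqrt {κ : ℝ} (hκ : 0 < κ) : cosK κ (π / √κ) = -1 := by
  have : √κ ≠ 0 := (sqrt_pos.2 hκ).ne'
  simp [cosK, hκ, mul_div_cancel₀ _ this]

theorem IsOpen.ae_differentiableAt_of_absolutelyContinuousOnInterval {s : Set ℝ} {f : ℝ → ℝ}
    (hs : IsOpen s) (hf : ∀ a ∈ s, ∀ b ∈ s, AbsolutelyContinuousOnInterval f a b) :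
    ∀ᵐ x, x ∈ s → DifferentiableAt ℝ f x := by
  have hrat : ∀ᵐ x, ∀ p q : ℚ, (p : ℝ) ∈ s → (q : ℝ) ∈ s → x ∈ uIcc (p : ℝ) q →
      DifferentiableAt ℝ f x := by
    simp only [ae_all_iff]
    exact fun p q hp hq => (hf p hp q hq).ae_differentiableAt
  filter_upwards [hrat] with x hx hxs
  obtain ⟨ε, hε, hball⟩ := Metric.isOpen_iff.1 hs x hxs
  obtain ⟨p, hpl, hpr⟩ := exists_rat_btwn (sub_lt_self x hε)
  obtain ⟨q, hql, hqr⟩ := exists_rat_btwn (lt_add_of_pos_right x hε)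
  refine hx p q (hball ?_) (hball ?_) (Icc_subset_uIcc ⟨hpr.le, hql.le⟩)
  · rw [Metric.mem_ball, Real.dist_eq, abs_sub_lt_iff]; constructor <;> linarith
  · rw [Metric.mem_ball, Real.dist_eq, abs_sub_lt_iff]; constructor <;> linarith

theorem IsOpen.abs_sub_lt_of_forall_abs_sub_le {s : Set ℝ} {D : ℝ} (hs : IsOpen s)
    (hD : ∀ x ∈ s, ∀ y ∈ s, |x - y| ≤ D) {x y : ℝ} (hx : x ∈ s) (hy : y ∈ s) : |x - y| < D := by
  obtain ⟨ε, hε, hball⟩ := Metric.isOpen_iff.1 hs y hy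
  have hmem : ∀ δ, |δ| < ε → y + δ ∈ s := fun δ hδ =>
    hball (by rwa [Metric.mem_ball, Real.dist_eq, add_sub_cancel_left])
  have h₁ := hD x hx _ (hmem (ε / 2) (by rw [abs_of_pos (half_pos hε)]; linarith))
  have h₂ := hD x hx _ (hmem (-(ε / 2)) (by rw [abs_neg, abs_of_pos (half_pos hε)]; linarith))
  rw [abs_le] at h₁ h₂
  rw [abs_lt]
  constructor <;> linarith

/-- `g'' + κ g ≤ 0` a.e. on `s`, where the derivative `g'` of `g` is absolutely continuous. -/
structure IsSupersolution (κ : ℝ) (g g' : ℝ → ℝ) (s : Set ℝ) : Prop where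
  hasDerivAt : ∀ x ∈ s, HasDerivAt g (g' x) x
  absolutelyContinuousOnInterval : ∀ a ∈ s, ∀ b ∈ s, AbsolutelyContinuousOnInterval g' a b
  ae_deriv_add_le : ∀ᵐ x, x ∈ s → deriv g' x + κ * g x ≤ 0

namespace IsSupersolution

variable {κ a b x y : ℝ} {g g' : ℝ → ℝ} {s s' : Set ℝ}

theorem mono (hg : IsSupersolution κ g g' s') (hs : s ⊆ s') : IsSupersolution κ g g' s where
  hasDerivAt x hx := hg.hasDerivAt x (hs hx)
  absolutelyContinuousOnInterval a ha b hb :=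
    hg.absolutelyContinuousOnInterval a (hs ha) b (hs hb)
  ae_deriv_add_le := by filter_upwards [hg.ae_deriv_add_le] with x hx hxs using hx (hs hxs)

/-- The Wronskian `g' c - g c'` has derivative `(g'' + κ g) c ≤ 0`. -/
theorem wronskian_le (hg : IsSupersolution κ g g' (Icc a b)) (hab : a ≤ b) {c c' : ℝ → ℝ}
    (hc : ∀ x, HasDerivAt c (c' x) x) (hc' : ∀ x, HasDerivAt c' (-(κ * c x)) x)
    (hc₀ : ∀ x ∈ Icc a b, 0 ≤ c x) :
    g' b * c b - g b * c' b ≤ g' a * c a - g a * c' a := by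
  have hI : uIcc a b = Icc a b := uIcc_of_le hab
  have hcont : Continuous c := continuous_iff_continuousAt.2 fun x => (hc x).continuousAt
  have hcont' : Continuous c' := continuous_iff_continuousAt.2 fun x => (hc' x).continuousAt
  have hg'ac := hg.absolutelyContinuousOnInterval a (left_mem_Icc.2 hab) b (right_mem_Icc.2 hab)
  have hgac : AbsolutelyContinuousOnInterval g a b :=
    .of_hasDerivAt (fun x hx => hg.hasDerivAt x (hI ▸ hx)) hg'ac.continuousOn.intervalIntegrable
  have hcac : AbsolutelyContinuousOnInterval c a b :=
    .of_hasDerivAt (fun x _ => hc x) (hcont'.intervalIntegrable a b)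
  have hc'ac : AbsolutelyContinuousOnInterval c' a b :=
    .of_hasDerivAt (fun x _ => hc' x) ((hcont.const_mul κ).neg.intervalIntegrable a b)
  refine ((hg'ac.mul hcac).sub (hgac.mul hc'ac)).le_of_ae_deriv_nonpos hab ?_
  filter_upwards [hg'ac.ae_differentiableAt, hg.ae_deriv_add_le] with x hdiff hle hx
  have hW := ((hdiff (hI ▸ hx)).hasDerivAt.mul (hc x)).sub ((hg.hasDerivAt x hx).mul (hc' x))
  calc deriv _ x = (deriv g' x + κ * g x) * c x := by rw [hW.deriv]; ring
    _ ≤ 0 := mul_nonpos_of_nonpos_of_nonneg (hle hx) (hc₀ x hx)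

theorem sqrt_mul_sub_le_pi (hg : IsSupersolution κ g g' (Icc a b)) (hκ : 0 < κ) (hab : a ≤ b)
    (hpos : ∀ x ∈ Icc a b, 0 < g x) : √κ * (b - a) ≤ π := by
  have hsqrt : 0 < √κ := sqrt_pos.2 hκ
  by_contra! hlt
  set z := a + π / √κ with hz
  have hza : z - a = π / √κ := by rw [hz]; ring
  have haz : a ≤ z := by rw [hz]; have := div_pos pi_pos hsqrt; linarith
  have hzb : z ≤ b := by rw [hz]; linarith [(div_lt_iff₀' hsqrt).2 hlt]
  have hW := (hg.mono (Icc_subset_Icc_right hzb)).wronskian_le haz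
    (c := fun x => sinK κ (x - a)) (c' := fun x => cosK κ (x - a))
    (fun x => (hasDerivAt_sinK κ (x - a)).comp_sub_const x a)
    (fun x => (hasDerivAt_cosK κ (x - a)).comp_sub_const x a)
    (fun x hx => sinK_nonneg (sub_nonneg.2 hx.1) (by
      rw [← le_div_iff₀' hsqrt, ← hza]; linarith [hx.2]))
  simp only [hza, sub_self, sinK_pi_div_sqrt hκ, cosK_pi_div_sqrt hκ, sinK_zero, cosK_zero] at hW
  linarith [hpos z ⟨haz, hzb⟩, hpos a ⟨le_rfl, hab⟩]

theorem sinK_mul_add_le (hg : IsSupersolution κ g g' (Icc a b)) (hab : a ≤ b)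
    (hπ : √κ * (b - a) ≤ π) {t : ℝ} (ht : t ∈ Icc (0 : ℝ) 1) :
    sinK κ (t * (b - a)) * g b + sinK κ ((1 - t) * (b - a)) * g a
      ≤ sinK κ (b - a) * g (a + t * (b - a)) := by
  obtain ⟨ht₀, ht₁⟩ := ht
  set m := a + t * (b - a) with hm
  have hma : m - a = t * (b - a) := by rw [hm]; ring
  have hbm : b - m = (1 - t) * (b - a) := by rw [hm]; ring
  have ham : a ≤ m := by nlinarith
  have hmb : m ≤ b := by nlinarith
  have hS : ∀ r, 0 ≤ r → r ≤ b - a → 0 ≤ sinK κ r := fun r hr₀ hr =>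
    sinK_nonneg hr₀ ((mul_le_mul_of_nonneg_left hr (sqrt_nonneg κ)).trans hπ)
  have hW₁ := (hg.mono (Icc_subset_Icc_right hmb)).wronskian_le ham
    (c := fun x => sinK κ (x - a)) (c' := fun x => cosK κ (x - a))
    (fun x => (hasDerivAt_sinK κ (x - a)).comp_sub_const x a)
    (fun x => (hasDerivAt_cosK κ (x - a)).comp_sub_const x a)
    (fun x hx => hS _ (sub_nonneg.2 hx.1) (by linarith [hx.2]))
  have hW₂ := (hg.mono (Icc_subset_Icc_left ham)).wronskian_le hmb
    (c := fun x => sinK κ (b - x)) (c' := fun x => -cosK κ (b - x))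
    (fun x => (hasDerivAt_sinK κ (b - x)).comp_const_sub b x)
    (fun x => ((hasDerivAt_cosK κ (b - x)).comp_const_sub b x).neg.congr_deriv (neg_neg _))
    (fun x hx => hS _ (sub_nonneg.2 hx.2) (by linarith [hx.1]))
  simp only [hma, hbm, sub_self, sinK_zero, cosK_zero] at hW₁ hW₂
  have hsum := sinK_add κ (t * (b - a)) ((1 - t) * (b - a))
  rw [show t * (b - a) + (1 - t) * (b - a) = b - a by ring] at hsum
  have hS₁ := hS (t * (b - a)) (by nlinarith) (by nlinarith)
  have hS₂ := hS ((1 - t) * (b - a)) (by nlinarith) (by nlinarith)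
  rw [hsum]
  linarith [mul_le_mul_of_nonneg_right hW₁ hS₂, mul_le_mul_of_nonneg_right hW₂ hS₁]

theorem sinK_mul_add_le_of_mem (hg : IsSupersolution κ g g' s) (hs : s.OrdConnected)
    {x₀ x₁ t : ℝ} (hx₀ : x₀ ∈ s) (hx₁ : x₁ ∈ s) (hπ : √κ * |x₁ - x₀| ≤ π)
    (ht : t ∈ Icc (0 : ℝ) 1) :
    sinK κ (t * |x₁ - x₀|) * g x₁ + sinK κ ((1 - t) * |x₁ - x₀|) * g x₀
      ≤ sinK κ |x₁ - x₀| * g (t * x₁ + (1 - t) * x₀) := by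
  rcases le_total x₀ x₁ with h | h
  · rw [abs_of_nonneg (sub_nonneg.2 h)] at hπ ⊢
    convert (hg.mono (hs.out hx₀ hx₁)).sinK_mul_add_le h hπ ht using 3
    ring
  · rw [abs_of_nonpos (sub_nonpos.2 h), neg_sub] at hπ ⊢
    have := (hg.mono (hs.out hx₁ hx₀)).sinK_mul_add_le h hπ (t := 1 - t)
      ⟨by linarith [ht.2], by linarith [ht.1]⟩
    rw [sub_sub_cancel, show x₁ + (1 - t) * (x₀ - x₁) = t * x₁ + (1 - t) * x₀ by ring] at this
    linarith

theorem sqrt_mul_abs_sub_le_pi (hg : IsSupersolution κ g g' s) (hs : s.OrdConnected)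
    (hκ : 0 < κ) (hpos : ∀ x ∈ s, 0 < g x) (hx : x ∈ s) (hy : y ∈ s) : √κ * |x - y| ≤ π := by
  rcases le_total x y with h | h
  · rw [abs_sub_comm, abs_of_nonneg (sub_nonneg.2 h)]
    exact (hg.mono (hs.out hx hy)).sqrt_mul_sub_le_pi hκ h fun z hz => hpos z (hs.out hx hy hz)
  · rw [abs_of_nonneg (sub_nonneg.2 h)]
    exact (hg.mono (hs.out hy hx)).sqrt_mul_sub_le_pi hκ h fun z hz => hpos z (hs.out hy hx hz)

theorem sqrt_mul_abs_sub_lt_pi (hg : IsSupersolution κ g g' s) (hs : s.OrdConnected)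
    (hso : IsOpen s) (hpos : ∀ x ∈ s, 0 < g x) (hx : x ∈ s) (hy : y ∈ s) :
    √κ * |x - y| < π := by
  rcases le_or_gt κ 0 with hκ | hκ
  · rw [sqrt_eq_zero'.2 hκ, zero_mul]
    exact pi_pos
  · have hsqrt := sqrt_pos.2 hκ
    rw [← lt_div_iff₀' hsqrt]
    exact hso.abs_sub_lt_of_forall_abs_sub_le (fun x hx y hy =>
      (le_div_iff₀' hsqrt).2 (hg.sqrt_mul_abs_sub_le_pi hs hκ hpos hx hy)) hx hy

end IsSupersolution

/-- `(h ^ α)'' = α h ^ α ((log h)'' + α ((log h)')²)` with `α = 1 / (N - 1)`. -/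
theorem isSupersolution_rpow {K N : ℝ} {h : ℝ → ℝ} {I : Set ℝ} (hN : 1 < N) (hI : IsOpen I)
    (hIc : I.OrdConnected) (hpos : ∀ x ∈ I, 0 < h x) (hdiff : ∀ x ∈ I, DifferentiableAt ℝ h x)
    (hac : ∀ a ∈ I, ∀ b ∈ I, AbsolutelyContinuousOnInterval (deriv h) a b)
    (hineq : ∀ᵐ x, x ∈ I → deriv (deriv h) x / h x - (deriv h x / h x) ^ 2
      + (deriv h x / h x) ^ 2 / (N - 1) ≤ -K) :
    IsSupersolution (K / (N - 1)) (fun x => h x ^ (1 / (N - 1)))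
      (fun x => 1 / (N - 1) * h x ^ (1 / (N - 1) - 1) * deriv h x) I := by
  set α := 1 / (N - 1) with hα
  have hα₀ : 0 < α := by rw [hα]; exact one_div_pos.2 (by linarith)
  have hpow : ∀ x ∈ I, HasDerivAt (fun y => h y ^ (α - 1))
      (deriv h x * (α - 1) * h x ^ (α - 1 - 1)) x := fun x hx =>
    (hdiff x hx).hasDerivAt.rpow_const (Or.inl (hpos x hx).ne')
  refine ⟨fun x hx => ?_, fun a ha b hb => ?_, ?_⟩
  · exact ((hdiff x hx).hasDerivAt.rpow_const (Or.inl (hpos x hx).ne')).congr_deriv (by ring)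
  · have hab := hIc.uIcc_subset ha hb
    have hcont : ContinuousOn h (uIcc a b) := fun x hx =>
      (hdiff x (hab hx)).continuousAt.continuousWithinAt
    have hpowac : AbsolutelyContinuousOnInterval (fun y => h y ^ (α - 1)) a b :=
      .of_hasDerivAt (fun x hx => hpow x (hab hx)) <| ContinuousOn.intervalIntegrable <|
        ((hac a ha b hb).continuousOn.mul continuousOn_const).mul
          (hcont.rpow_const fun x hx => Or.inl (hpos x (hab hx)).ne')
    exact (hpowac.const_mul α).fun_mul (hac a ha b hb)
  · filter_upwards [hI.ae_differentiableAt_of_absolutelyContinuousOnInterval hac, hineq]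
      with x hd hle hx
    have hx₀ := hpos x hx
    rw [(((hpow x hx).const_mul α).fun_mul (hd hx).hasDerivAt).deriv]
    have key : α * (deriv h x * (α - 1) * h x ^ (α - 1 - 1)) * deriv h x
          + α * h x ^ (α - 1) * deriv (deriv h) x + K / (N - 1) * h x ^ α
        = α * h x ^ α * (deriv (deriv h) x / h x - (deriv h x / h x) ^ 2
          + (deriv h x / h x) ^ 2 / (N - 1) + K) := by
      rw [rpow_sub hx₀, rpow_sub hx₀, rpow_one, hα]
      field_simp
      ring
    rw [key]
    exact mul_nonpos_of_nonneg_of_nonpos (by positivity) (by linarith [hle hx])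

theorem sigmaCoeff_eq_ofReal_sinK_div {K Np t θ : ℝ} (hNp : 0 < Np) (hθ : 0 < θ)
    (hπ : √(K / Np) * θ < π) :
    sigmaCoeff K Np t θ = ENNReal.ofReal (sinK (K / Np) (t * θ) / sinK (K / Np) θ) := by
  rcases lt_trichotomy K 0 with hK | rfl | hK
  · have hs : √(-(K / Np)) ≠ 0 := (sqrt_pos.2 (neg_pos.2 (div_neg_of_neg_of_pos hK hNp))).ne'
    simp only [sigmaCoeff, sinK, hθ.ne', hK.not_gt, hK.ne, div_neg_of_neg_of_pos hK hNp |>.not_gt,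
      (div_neg_of_neg_of_pos hK hNp).ne, if_false, neg_div]
    rw [div_div_div_cancel_right₀ hs]
    ring_nf
  · simp only [sigmaCoeff, sinK, hθ.ne', lt_irrefl, zero_div, if_false, if_true]
    rw [mul_div_cancel_right₀ t hθ.ne']
  · have hs : √(K / Np) ≠ 0 := (sqrt_pos.2 (div_pos hK hNp)).ne'
    simp only [sigmaCoeff, sinK, hθ.ne', hK, div_pos hK hNp, mul_comm θ, hπ, if_true, if_false]
    rw [div_div_div_cancel_right₀ hs]
    ring_nf

theorem ENNReal.ofReal_mul_add_ofReal_mul_le {p q x y z : ℝ} (hp : 0 ≤ p) (hq : 0 ≤ q)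
    (hx : 0 ≤ x) (hy : 0 ≤ y) (h : p * x + q * y ≤ z) :
    ENNReal.ofReal p * ENNReal.ofReal x + ENNReal.ofReal q * ENNReal.ofReal y
      ≤ ENNReal.ofReal z := by
  rw [← ENNReal.ofReal_mul hp, ← ENNReal.ofReal_mul hq,
    ← ENNReal.ofReal_add (mul_nonneg hp hx) (mul_nonneg hq hy)]
  exact ENNReal.ofReal_le_ofReal h

theorem isCDDensity_of_sinK_mul_add_le {K N : ℝ} {h : ℝ → ℝ} {I : Set ℝ} (hN : 1 < N)
    (hnonneg : ∀ x ∈ I, 0 ≤ h x)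
    (hπ : ∀ x₀ ∈ I, ∀ x₁ ∈ I, √(K / (N - 1)) * |x₁ - x₀| < π)
    (hle : ∀ x₀ ∈ I, ∀ x₁ ∈ I, ∀ t ∈ Icc (0 : ℝ) 1,
      sinK (K / (N - 1)) (t * |x₁ - x₀|) * h x₁ ^ (1 / (N - 1))
        + sinK (K / (N - 1)) ((1 - t) * |x₁ - x₀|) * h x₀ ^ (1 / (N - 1))
      ≤ sinK (K / (N - 1)) |x₁ - x₀| * h (t * x₁ + (1 - t) * x₀) ^ (1 / (N - 1))) :
    IsCDDensity K N h I := by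
  refine ⟨hnonneg, fun x₀ hx₀ x₁ hx₁ t ht => ?_⟩
  have hrpow : ∀ x ∈ I, 0 ≤ h x ^ (1 / (N - 1)) := fun x hx => rpow_nonneg (hnonneg x hx) _
  have ht' : 0 ≤ 1 - t := sub_nonneg.2 ht.2
  rcases (abs_nonneg (x₁ - x₀)).eq_or_lt with hθ | hθ
  · obtain rfl : x₁ = x₀ := sub_eq_zero.1 (abs_eq_zero.1 hθ.symm)
    rw [← hθ, show t * x₁ + (1 - t) * x₁ = x₁ by ring]
    simp only [sigmaCoeff, if_true]
    exact ENNReal.ofReal_mul_add_ofReal_mul_le ht.1 ht' (hrpow x₁ hx₁) (hrpow x₁ hx₁)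
      (by linarith)
  · have hπ' := hπ x₀ hx₀ x₁ hx₁
    have hS : ∀ r ∈ Icc (0 : ℝ) 1, 0 ≤ sinK (K / (N - 1)) (r * |x₁ - x₀|) := fun r hr =>
      sinK_nonneg (mul_nonneg hr.1 hθ.le) ((mul_le_mul_of_nonneg_left
        (mul_le_of_le_one_left hθ.le hr.2) (sqrt_nonneg _)).trans hπ'.le)
    have hs := sinK_pos hθ hπ'
    rw [sigmaCoeff_eq_ofReal_sinK_div (by linarith) hθ hπ',
      sigmaCoeff_eq_ofReal_sinK_div (by linarith) hθ hπ']
    refine ENNReal.ofReal_mul_add_ofReal_mul_le (div_nonneg (hS t ht) hs.le)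
      (div_nonneg (hS (1 - t) ⟨ht', by linarith [ht.1]⟩) hs.le) (hrpow x₁ hx₁) (hrpow x₀ hx₀) ?_
    rw [div_mul_eq_mul_div, div_mul_eq_mul_div, ← add_div, div_le_iff₀ hs, mul_comm _ (sinK _ _)]
    exact hle x₀ hx₀ x₁ hx₁ t ht

/-- Differential criterion for `CD(K,N)` densities: if `h` is positive and differentiable
on an open interval `I`, its derivative is locally absolutely continuous on `I` (encoded
via the fundamental theorem of calculus with density `deriv (deriv h)`), and
`(log h)''(x) + ((log h)'(x))²/(N-1) ≤ -K` for a.e. `x ∈ I`, then (i) if `K > 0` the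
length of `I` is at most `π·√((N-1)/K)` and (ii) `h` is a `CD(K,N)` density on `I`. -/
theorem statement16 (K N : ℝ) (hN : 1 < N) (I : Set ℝ)
    (hIopen : IsOpen I) (hIconv : Convex ℝ I) (h : ℝ → ℝ)
    (hpos : ∀ x ∈ I, 0 < h x) (hdiff : ∀ x ∈ I, DifferentiableAt ℝ h x)
    (hAC : ∀ x ∈ I, ∀ y ∈ I,
      IntervalIntegrable (deriv (deriv h)) MeasureTheory.volume x y ∧
      deriv h y = deriv h x + ∫ u in x..y, deriv (deriv h) u)
    (hineq : ∀ᵐ x ∂((MeasureTheory.volume : MeasureTheory.Measure ℝ).restrict I),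
      deriv (deriv h) x / h x - (deriv h x / h x) ^ 2
          + (deriv h x / h x) ^ 2 / (N - 1) ≤ -K) :
    (0 < K → ∀ x ∈ I, ∀ y ∈ I, |x - y| ≤ Real.pi * Real.sqrt ((N - 1) / K)) ∧
      IsCDDensity K N h I := by
  have hIc := hIconv.ordConnected
  have hac : ∀ a ∈ I, ∀ b ∈ I, AbsolutelyContinuousOnInterval (deriv h) a b := fun a ha b hb =>
    .of_eq_add_integral (hAC a ha b hb).1 fun x hx => (hAC a ha x (hIc.uIcc_subset ha hb hx)).2
  have hg := isSupersolution_rpow hN hIopen hIc hpos hdiff hac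
    ((ae_restrict_iff' hIopen.measurableSet).1 hineq)
  have hgpos : ∀ x ∈ I, 0 < h x ^ (1 / (N - 1)) := fun x hx => rpow_pos_of_pos (hpos x hx) _
  have hπ : ∀ x₀ ∈ I, ∀ x₁ ∈ I, √(K / (N - 1)) * |x₁ - x₀| < π := fun x₀ hx₀ x₁ hx₁ =>
    hg.sqrt_mul_abs_sub_lt_pi hIc hIopen hgpos hx₁ hx₀
  refine ⟨fun hK x hx y hy => ?_, isCDDensity_of_sinK_mul_add_le hN (fun x hx => (hpos x hx).le)
    hπ fun x₀ hx₀ x₁ hx₁ t => hg.sinK_mul_add_le_of_mem hIc hx₀ hx₁ (hπ x₀ hx₀ x₁ hx₁).le⟩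
  have hκ : 0 < √(K / (N - 1)) := sqrt_pos.2 (div_pos hK (by linarith))
  have hdiam := hg.sqrt_mul_abs_sub_le_pi hIc (sqrt_pos.1 hκ) hgpos hx hy
  rwa [← inv_div, sqrt_inv, ← div_eq_mul_inv, le_div_iff₀' hκ]
end

section
/- Let K ∈ ℝ, N ∈ (1,∞), and let h be a CD(K,N) density on a finite interval (a,b), not identically zero (hence strictly positive on (a,b)). Then at any point x ∈ (a,b) at which h is differentiable: −(N−1)·ct_{K/(N−1)}(b−x) ≤ (log h)′(x) ≤ (N−1)·ct_{K/(N−1)}(x−a). In particular, log h is locally Lipschitz on (a,b) with bounds depending continuously only on x, a, b, K, N. -/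
/-- The coefficient `ct_κ(θ)`: `√κ·cot(θ√κ)` for `κ > 0`, `1/θ` for `κ = 0`, and
`√(-κ)·coth(θ√(-κ))` for `κ < 0`. -/
noncomputable def ctCoeff (κ θ : ℝ) : ℝ :=
  if 0 < κ then Real.sqrt κ * (Real.cos (θ * Real.sqrt κ) / Real.sin (θ * Real.sqrt κ))
  else if κ = 0 then 1 / θ
  else Real.sqrt (-κ) * (Real.cosh (θ * Real.sqrt (-κ)) / Real.sinh (θ * Real.sqrt (-κ)))

open Real Set Filter Topology

/-!
With `g = h^{1/(N-1)}`, the `CD(K,N)` inequality between `x` and `x + θ` bounds `g(x + s)` from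
below by `σ^{(1-s/θ)}(θ) g(x)`, with equality at `s = 0`. Comparing right derivatives at `s = 0`
gives `g'(x) ≥ -ct(θ) g(x)`, i.e. `(log h)'(x) ≥ -(N-1) ct(θ)`; letting `θ ↑ b - x` yields the
lower bound, and the upper bound is the lower bound for the reflected density `h(a + b - ·)`.
For `K > 0`, the same inequality with `t = 0` would have an infinite left side for points at
distance `≥ π/√(K/(N-1))`; hence `(b - x)√(K/(N-1)) < π` and `ct` stays continuous up to `b - x`.
-/

theorem HasDerivAt.le_of_eventuallyLE_nhdsGT {f g : ℝ → ℝ} {f' g' a : ℝ}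
    (hf : HasDerivAt f f' a) (hg : HasDerivAt g g' a) (hfg : f a = g a)
    (hle : f ≤ᶠ[𝓝[>] a] g) : f' ≤ g' := by
  have hslope := hasDerivAt_iff_tendsto_slope.mp (hg.sub hf)
  refine sub_nonneg.mp (ge_of_tendsto (hslope.mono_left (nhdsGT_le_nhdsNE a)) ?_)
  filter_upwards [hle, self_mem_nhdsWithin] with y hy (hay : a < y)
  rw [slope_def_field, Pi.sub_apply, Pi.sub_apply, hfg, sub_self, sub_zero]
  exact div_nonneg (sub_nonneg.mpr hy) (sub_nonneg.mpr hay.le)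

/-- The generalized sine `s_κ`: `σ^{(t)}_{K,𝒩}(θ) = s_κ(tθ)/s_κ(θ)` (where finite) and `ct_κ = s_κ'/s_κ`
for `κ = K/𝒩`. -/
noncomputable def genSin (κ θ : ℝ) : ℝ :=
  if 0 < κ then sin (θ * √κ) / √κ
  else if κ = 0 then θ
  else sinh (θ * √(-κ)) / √(-κ)

noncomputable def genCos (κ θ : ℝ) : ℝ :=
  if 0 < κ then cos (θ * √κ)
  else if κ = 0 then 1
  else cosh (θ * √(-κ))

theorem hasDerivAt_genSin (κ θ : ℝ) : HasDerivAt (genSin κ) (genCos κ θ) θ := by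
  rcases lt_trichotomy κ 0 with hκ | rfl | hκ
  · have hc : √(-κ) ≠ 0 := (sqrt_pos.mpr (neg_pos.mpr hκ)).ne'
    have hsin : genSin κ = fun θ => sinh (θ * √(-κ)) / √(-κ) := by
      ext; simp [genSin, hκ.not_gt, hκ.ne]
    rw [hsin, genCos, if_neg hκ.not_gt, if_neg hκ.ne]
    exact ((hasDerivAt_mul_const (x := θ) √(-κ)).sinh.div_const √(-κ)).congr_deriv
      (by field_simp)
  · have hsin : genSin 0 = id := by ext; simp [genSin]
    simpa [hsin, genCos] using hasDerivAt_id θ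
  · have hc : √κ ≠ 0 := (sqrt_pos.mpr hκ).ne'
    have hsin : genSin κ = fun θ => sin (θ * √κ) / √κ := by ext; simp [genSin, hκ]
    rw [hsin, genCos, if_pos hκ]
    exact ((hasDerivAt_mul_const (x := θ) √κ).sin.div_const √κ).congr_deriv (by field_simp)

theorem continuous_genCos (κ : ℝ) : Continuous (genCos κ) := by
  unfold genCos
  split_ifs <;> fun_prop

theorem genSin_pos {κ θ : ℝ} (hθ : 0 < θ) (hπ : 0 < κ → θ * √κ < π) : 0 < genSin κ θ := by
  rcases lt_trichotomy κ 0 with hκ | rfl | hκ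
  · have hc : 0 < √(-κ) := sqrt_pos.mpr (neg_pos.mpr hκ)
    rw [genSin, if_neg hκ.not_gt, if_neg hκ.ne]
    exact div_pos (sinh_pos_iff.mpr (by positivity)) hc
  · simpa [genSin] using hθ
  · have hc : 0 < √κ := sqrt_pos.mpr hκ
    rw [genSin, if_pos hκ]
    exact div_pos (sin_pos_of_pos_of_lt_pi (by positivity) (hπ hκ)) hc

theorem ctCoeff_eq_genCos_div_genSin (κ θ : ℝ) : ctCoeff κ θ = genCos κ θ / genSin κ θ := by
  rcases lt_trichotomy κ 0 with hκ | rfl | hκ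
  · have hc : √(-κ) ≠ 0 := (sqrt_pos.mpr (neg_pos.mpr hκ)).ne'
    simp only [ctCoeff, genCos, genSin, if_neg hκ.not_gt, if_neg hκ.ne]
    field_simp
  · simp [ctCoeff, genCos, genSin]
  · have hc : √κ ≠ 0 := (sqrt_pos.mpr hκ).ne'
    simp only [ctCoeff, genCos, genSin, if_pos hκ]
    field_simp

theorem continuousAt_ctCoeff {κ θ : ℝ} (hθ : 0 < θ) (hπ : 0 < κ → θ * √κ < π) :
    ContinuousAt (ctCoeff κ) θ := by
  rw [show ctCoeff κ = fun θ => genCos κ θ / genSin κ θ from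
    funext (ctCoeff_eq_genCos_div_genSin κ)]
  exact (continuous_genCos κ).continuousAt.div (hasDerivAt_genSin κ θ).continuousAt
    (genSin_pos hθ hπ).ne'

theorem sigmaCoeff_eq_genSin {K Np t θ : ℝ} (hNp : 0 < Np) (hθ : θ ≠ 0)
    (hπ : 0 < K / Np → θ * √(K / Np) < π) :
    sigmaCoeff K Np t θ = ENNReal.ofReal (genSin (K / Np) (t * θ) / genSin (K / Np) θ) := by
  rcases lt_trichotomy K 0 with hK | rfl | hK
  · have hκ : K / Np < 0 := div_neg_of_neg_of_pos hK hNp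
    have hc : √(-(K / Np)) ≠ 0 := (sqrt_pos.mpr (neg_pos.mpr hκ)).ne'
    simp only [sigmaCoeff, genSin, if_neg hθ, if_neg hK.not_gt, if_neg hK.ne, if_neg hκ.not_gt,
      if_neg hκ.ne, neg_div, mul_assoc]
    field_simp
  · simp [sigmaCoeff, genSin, hθ]
  · have hκ : 0 < K / Np := div_pos hK hNp
    have hc : √(K / Np) ≠ 0 := (sqrt_pos.mpr hκ).ne'
    simp only [sigmaCoeff, genSin, if_neg hθ, if_pos hK, if_pos (hπ hκ), if_pos hκ, mul_assoc]
    field_simp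

theorem sigmaCoeff_ne_zero {K Np t θ : ℝ} (hNp : 0 < Np) (ht : 0 < t) (ht1 : t ≤ 1)
    (hθ : 0 ≤ θ) : sigmaCoeff K Np t θ ≠ 0 := by
  rcases hθ.eq_or_lt with rfl | hθ
  · simp [sigmaCoeff, ht]
  by_cases hπ : 0 < K / Np → θ * √(K / Np) < π
  · have htθ : 0 < K / Np → t * θ * √(K / Np) < π := fun hκ =>
      lt_of_le_of_lt (by gcongr; exact mul_le_of_le_one_left hθ.le ht1) (hπ hκ)
    rw [sigmaCoeff_eq_genSin hNp hθ.ne' hπ]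
    exact (ENNReal.ofReal_pos.mpr
      (div_pos (genSin_pos (mul_pos ht hθ) htθ) (genSin_pos hθ hπ))).ne'
  · push Not at hπ
    have hK : 0 < K := (div_pos_iff_of_pos_right hNp).mp hπ.1
    simp [sigmaCoeff, hθ.ne', hK, hπ.2.not_gt]

namespace IsCDDensity

variable {K N : ℝ} {h : ℝ → ℝ} {I : Set ℝ}

theorem mul_sqrt_lt_pi (hCD : IsCDDensity K N h I) (hK : 0 < K) {x₀ x₁ : ℝ} (hx₀ : x₀ ∈ I)
    (hx₁ : x₁ ∈ I) (hpos : 0 < h x₀) : |x₁ - x₀| * √(K / (N - 1)) < π := by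
  by_contra hge
  have hθ : |x₁ - x₀| ≠ 0 := by
    rintro hθ
    rw [hθ, zero_mul] at hge
    exact hge pi_pos
  have hCD₀ := hCD.2 x₀ hx₀ x₁ hx₁ 0 ⟨le_rfl, zero_le_one⟩
  have hσ : sigmaCoeff K (N - 1) 1 |x₁ - x₀| = ⊤ := by
    simp [sigmaCoeff, hθ, hK, hge]
  have hG : ENNReal.ofReal (h x₀ ^ (1 / (N - 1))) ≠ 0 :=
    (ENNReal.ofReal_pos.mpr (rpow_pos_of_pos hpos _)).ne'
  rw [sub_zero, hσ, ENNReal.top_mul hG, add_top, top_le_iff] at hCD₀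
  exact ENNReal.ofReal_ne_top hCD₀

theorem pos_comb_of_pos (hN : 1 < N) (hCD : IsCDDensity K N h I) {z w t : ℝ} (hz : z ∈ I)
    (hw : w ∈ I) (ht : t ∈ Ico (0 : ℝ) 1) (hy : t * w + (1 - t) * z ∈ I) (hz0 : 0 < h z) :
    0 < h (t * w + (1 - t) * z) := by
  have hCDt := hCD.2 z hz w hw t ⟨ht.1, ht.2.le⟩
  have hσ : sigmaCoeff K (N - 1) (1 - t) |w - z| ≠ 0 :=
    sigmaCoeff_ne_zero (by linarith) (by linarith [ht.2]) (by linarith [ht.1]) (abs_nonneg _)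
  have hG : ENNReal.ofReal (h z ^ (1 / (N - 1))) ≠ 0 :=
    (ENNReal.ofReal_pos.mpr (rpow_pos_of_pos hz0 _)).ne'
  have hGy : 0 < h (t * w + (1 - t) * z) ^ (1 / (N - 1)) := by
    refine ENNReal.ofReal_pos.mp (pos_iff_ne_zero.mpr fun h0 => mul_ne_zero hσ hG ?_)
    exact le_zero_iff.mp (h0 ▸ le_add_self.trans hCDt)
  refine (hCD.1 _ hy).lt_of_ne fun h0 => ?_
  rw [← h0, zero_rpow (one_div_ne_zero (by linarith))] at hGy
  exact hGy.false

theorem pos_of_ne_zero (hN : 1 < N) {a b : ℝ} (hCD : IsCDDensity K N h (Ioo a b))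
    (hne : ∃ z ∈ Ioo a b, h z ≠ 0) : ∀ y ∈ Ioo a b, 0 < h y := by
  obtain ⟨z, hz, hz0⟩ := hne
  replace hz0 : 0 < h z := (hCD.1 z hz).lt_of_ne' hz0
  intro y hy
  have hseg : ∀ w ∈ Ioo a b, w ≠ z → (y - z) / (w - z) ∈ Ico (0 : ℝ) 1 → 0 < h y := by
    intro w hw hwz ht
    have hpt : (y - z) / (w - z) * w + (1 - (y - z) / (w - z)) * z = y := by
      field_simp [sub_ne_zero.mpr hwz]
      ring
    simpa [hpt] using hCD.pos_comb_of_pos hN hz hw ht (by rwa [hpt]) hz0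
  obtain ⟨ha, hb⟩ := hy
  rcases le_or_gt y z with hyz | hzy
  · refine hseg ((a + y) / 2) ⟨by linarith, by linarith⟩ (by linarith) ⟨?_, ?_⟩
    · exact div_nonneg_of_nonpos (by linarith) (by linarith)
    · exact (div_lt_one_of_neg (by linarith)).mpr (by linarith)
  · refine hseg ((y + b) / 2) ⟨by linarith, by linarith⟩ (by linarith) ⟨?_, ?_⟩
    · exact div_nonneg (by linarith) (by linarith)
    · exact (div_lt_one (by linarith)).mpr (by linarith)

theorem reflect {a b : ℝ} (hCD : IsCDDensity K N h (Ioo a b)) :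
    IsCDDensity K N (fun y => h (a + b - y)) (Ioo a b) := by
  have hmem : ∀ y ∈ Ioo a b, a + b - y ∈ Ioo a b := fun y hy =>
    ⟨by linarith [hy.2], by linarith [hy.1]⟩
  refine ⟨fun y hy => hCD.1 _ (hmem y hy), fun x₀ hx₀ x₁ hx₁ t ht => ?_⟩
  have hCDt := hCD.2 _ (hmem x₀ hx₀) _ (hmem x₁ hx₁) t ht
  rwa [show a + b - x₁ - (a + b - x₀) = -(x₁ - x₀) by ring, abs_neg,
    show t * (a + b - x₁) + (1 - t) * (a + b - x₀) = a + b - (t * x₁ + (1 - t) * x₀) by ring]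
    at hCDt

theorem genSin_div_mul_rpow_le (hN : 1 < N) (hCD : IsCDDensity K N h I) {x θ s : ℝ}
    (hx : x ∈ I) (hxθ : x + θ ∈ I) (hθ : 0 < θ)
    (hπ : 0 < K / (N - 1) → θ * √(K / (N - 1)) < π) (hpos : 0 < h x) (hs : s ∈ Ico 0 θ) :
    genSin (K / (N - 1)) (θ - s) / genSin (K / (N - 1)) θ * h x ^ (1 / (N - 1))
      ≤ h (x + s) ^ (1 / (N - 1)) := by
  have hNp : 0 < N - 1 := by linarith
  have hπs : 0 < K / (N - 1) → (θ - s) * √(K / (N - 1)) < π := fun hκ =>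
    lt_of_le_of_lt (by gcongr; linarith [hs.1]) (hπ hκ)
  have hσ : 0 < genSin (K / (N - 1)) (θ - s) / genSin (K / (N - 1)) θ :=
    div_pos (genSin_pos (by linarith [hs.2]) hπs) (genSin_pos hθ hπ)
  have hCDs := hCD.2 x hx (x + θ) hxθ (s / θ)
    ⟨div_nonneg hs.1 hθ.le, (div_le_one hθ).mpr hs.2.le⟩
  rw [add_sub_cancel_left, abs_of_pos hθ, sigmaCoeff_eq_genSin (t := 1 - s / θ) hNp hθ.ne' hπ,
    show (1 - s / θ) * θ = θ - s by field_simp,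
    show s / θ * (x + θ) + (1 - s / θ) * x = x + s by field_simp; ring,
    ← ENNReal.ofReal_mul hσ.le] at hCDs
  exact (ENNReal.ofReal_le_ofReal_iff'.mp (le_add_self.trans hCDs)).resolve_right
    (mul_pos hσ (rpow_pos_of_pos hpos _)).not_ge

theorem neg_ctCoeff_le_div (hN : 1 < N) (hCD : IsCDDensity K N h I) {x θ d : ℝ}
    (hx : x ∈ I) (hxθ : x + θ ∈ I) (hθ : 0 < θ)
    (hπ : 0 < K / (N - 1) → θ * √(K / (N - 1)) < π) (hpos : 0 < h x) (hd : HasDerivAt h d x) :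
    -(N - 1) * ctCoeff (K / (N - 1)) θ ≤ d / h x := by
  set κ := K / (N - 1)
  set p := 1 / (N - 1)
  have hNp : 0 < N - 1 := by linarith
  have hS := genSin_pos hθ hπ
  have hG : 0 < h x ^ p := rpow_pos_of_pos hpos p
  have hψ : HasDerivAt (fun s => genSin κ (θ - s) / genSin κ θ * h x ^ p)
      (-genCos κ θ / genSin κ θ * h x ^ p) 0 := by
    have := ((hasDerivAt_genSin κ (θ - 0)).comp_const_sub θ 0).div_const (genSin κ θ)
    simpa only [sub_zero, neg_div] using this.mul_const (h x ^ p)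
  have hg : HasDerivAt (fun s => h (x + s) ^ p) (d * p * h x ^ (p - 1)) 0 :=
    .comp_const_add x 0 (by rw [add_zero]; exact hd.rpow_const (p := p) (Or.inl hpos.ne'))
  have hle := hψ.le_of_eventuallyLE_nhdsGT hg (by simp [hS.ne'])
    (by filter_upwards [Ioo_mem_nhdsGT hθ] with s hs using
      hCD.genSin_div_mul_rpow_le hN hx hxθ hθ hπ hpos ⟨hs.1.le, hs.2⟩)
  rw [rpow_sub_one hpos.ne', show d * p * (h x ^ p / h x) = d / h x / (N - 1) * h x ^ p by
    simp only [p]; ring] at hle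
  rw [ctCoeff_eq_genCos_div_genSin, neg_mul, ← mul_neg, mul_comm, ← le_div_iff₀ hNp, ← neg_div]
  exact le_of_mul_le_mul_right hle hG

theorem sub_mul_sqrt_lt_pi (hN : 1 < N) {a b x : ℝ} (hCD : IsCDDensity K N h (Ioo a b))
    (hpos : ∀ y ∈ Ioo a b, 0 < h y) (hκ : 0 < K / (N - 1)) (hx : x ∈ Ioo a b) :
    (b - x) * √(K / (N - 1)) < π := by
  have hK : 0 < K := (div_pos_iff_of_pos_right (by linarith)).mp hκ
  have hc : 0 < √(K / (N - 1)) := sqrt_pos.mpr hκ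
  by_contra! hge
  have hπc : π / √(K / (N - 1)) ≤ b - x := (div_le_iff₀ hc).mpr hge
  have hy : (a + x) / 2 ∈ Ioo a b := ⟨by linarith [hx.1], by linarith [hx.1, hx.2]⟩
  have hy' : (a + x) / 2 + π / √(K / (N - 1)) ∈ Ioo a b :=
    ⟨by linarith [hx.1, div_pos pi_pos hc], by linarith [hx.1]⟩
  have := hCD.mul_sqrt_lt_pi hK hy hy' (hpos _ hy)
  rw [add_sub_cancel_left, abs_of_pos (div_pos pi_pos hc), div_mul_cancel₀ _ hc.ne'] at this
  exact this.false

theorem neg_ctCoeff_sub_le_div (hN : 1 < N) {a b x d : ℝ} (hCD : IsCDDensity K N h (Ioo a b))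
    (hpos : ∀ y ∈ Ioo a b, 0 < h y) (hx : x ∈ Ioo a b) (hd : HasDerivAt h d x) :
    -(N - 1) * ctCoeff (K / (N - 1)) (b - x) ≤ d / h x := by
  have hπ : 0 < K / (N - 1) → (b - x) * √(K / (N - 1)) < π := fun hκ =>
    hCD.sub_mul_sqrt_lt_pi hN hpos hκ hx
  have hbound : ∀ θ ∈ Ioo 0 (b - x), -(N - 1) * ctCoeff (K / (N - 1)) θ ≤ d / h x :=
    fun θ hθ => hCD.neg_ctCoeff_le_div hN hx ⟨by linarith [hθ.1, hx.1], by linarith [hθ.2]⟩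
      hθ.1 (fun hκ => lt_of_le_of_lt (by gcongr; exact hθ.2.le) (hπ hκ)) (hpos x hx) hd
  have hcont : ContinuousAt (ctCoeff (K / (N - 1))) (b - x) :=
    continuousAt_ctCoeff (sub_pos.mpr hx.2) hπ
  refine le_of_tendsto
    ((continuousAt_const.mul hcont).tendsto.mono_left (nhdsWithin_le_nhds (s := Iio (b - x)))) ?_
  filter_upwards [Ioo_mem_nhdsLT (sub_pos.mpr hx.2)] with θ hθ using hbound θ hθ

end IsCDDensity

theorem statement17_general (K N a b : ℝ) (hN : 1 < N)
    (h : ℝ → ℝ) (hCD : IsCDDensity K N h (Set.Ioo a b))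
    (hne : ∃ x ∈ Set.Ioo a b, h x ≠ 0) :
    ∀ x ∈ Set.Ioo a b, ∀ d : ℝ, HasDerivAt h d x →
      -(N - 1) * ctCoeff (K / (N - 1)) (b - x) ≤ d / h x ∧
      d / h x ≤ (N - 1) * ctCoeff (K / (N - 1)) (x - a) := by
  intro x hx d hd
  have hpos := hCD.pos_of_ne_zero hN hne
  have hx' : a + b - x ∈ Ioo a b := ⟨by linarith [hx.2], by linarith [hx.1]⟩
  have hd' : HasDerivAt (fun y => h (a + b - y)) (-d) (a + b - x) :=
    .comp_const_sub (a + b) _ (by rwa [sub_sub_cancel])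
  have hreflected := hCD.reflect.neg_ctCoeff_sub_le_div hN
    (fun y hy => hpos _ ⟨by linarith [hy.2], by linarith [hy.1]⟩) hx' hd'
  rw [sub_sub_cancel, show b - (a + b - x) = x - a by ring, neg_div] at hreflected
  exact ⟨hCD.neg_ctCoeff_sub_le_div hN hpos hx hd, by linarith⟩

/-- A-priori estimates on the logarithmic derivative of a `CD(K,N)` density `h` on a
finite interval `(a,b)`: at any differentiability point `x ∈ (a,b)`,
`-(N-1)·ct_{K/(N-1)}(b-x) ≤ (log h)'(x) ≤ (N-1)·ct_{K/(N-1)}(x-a)`. -/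
theorem statement17 (K N a b : ℝ) (hN : 1 < N) (hab : a < b)
    (h : ℝ → ℝ) (hCD : IsCDDensity K N h (Set.Ioo a b))
    (hne : ∃ x ∈ Set.Ioo a b, h x ≠ 0) :
    ∀ x ∈ Set.Ioo a b, ∀ d : ℝ, HasDerivAt h d x →
      -(N - 1) * ctCoeff (K / (N - 1)) (b - x) ≤ d / h x ∧
      d / h x ≤ (N - 1) * ctCoeff (K / (N - 1)) (x - a) :=
  statement17_general K N a b hN h hCD hne
end

section
/- Let K ∈ ℝ, N ∈ (1,∞), and let h be a CD(K,N) density on a finite interval (a,b) with ∫_a^b h(x) dx = 1. Then: if K ≥ 0, sup_{x ∈ (a,b)} h(x) ≤ N/(b−a); and if K < 0, sup_{x ∈ (a,b)} h(x) ≤ (b−a)^{−1}·(∫_0^1 (σ^{(t)}_{K,N−1}(b−a))^{N−1} dt)^{−1}. -/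
open Real Set Filter Topology MeasureTheory intervalIntegral

lemma mul_sin_le_sin_mul {s φ : ℝ} (hs : s ∈ Icc (0 : ℝ) 1) (hφ : φ ∈ Icc 0 π) :
    s * sin φ ≤ sin (s * φ) := by
  simpa using strictConcaveOn_sin_Icc.concaveOn.2 (left_mem_Icc.2 pi_pos.le) hφ
    (sub_nonneg.2 hs.2) hs.1 (sub_add_cancel 1 s)

lemma mul_cosh_mul_mul_sinh_le {s θ : ℝ} (hs : s ∈ Icc (0 : ℝ) 1) (hθ : 0 ≤ θ) :
    s * cosh (s * θ) * sinh θ ≤ sinh (s * θ) * cosh θ := by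
  set F : ℝ → ℝ := fun u ↦ sinh (s * u) * cosh u - s * cosh (s * u) * sinh u
  have hF : ∀ u, HasDerivAt F ((1 - s ^ 2) * (sinh (s * u) * sinh u)) u := by
    intro u
    have hs' : HasDerivAt (fun u ↦ s * u) s u := by simpa using (hasDerivAt_id u).const_mul s
    exact ((hs'.sinh.mul (hasDerivAt_cosh u)).sub
      ((hs'.cosh.const_mul s).mul (hasDerivAt_sinh u))).congr_deriv (by ring)
  have hmono : MonotoneOn F (Ici 0) := by
    refine monotoneOn_of_deriv_nonneg (convex_Ici 0)
      (fun u _ ↦ (hF u).continuousAt.continuousWithinAt)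
      (fun u _ ↦ (hF u).differentiableAt.differentiableWithinAt) fun u hu ↦ ?_
    rw [interior_Ici, mem_Ioi] at hu
    rw [(hF u).deriv]
    have : 0 ≤ 1 - s ^ 2 := by nlinarith [hs.1, hs.2]
    have : 0 ≤ sinh (s * u) := sinh_nonneg_iff.2 (mul_nonneg hs.1 hu.le)
    have : 0 ≤ sinh u := sinh_nonneg_iff.2 hu.le
    positivity
  have := hmono (mem_Ici.2 le_rfl) hθ hθ
  simp only [F, mul_zero, sinh_zero, cosh_zero, zero_mul, sub_zero] at this
  linarith

lemma sinh_mul_div_sinh_antitoneOn {s : ℝ} (hs : s ∈ Icc (0 : ℝ) 1) :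
    AntitoneOn (fun c ↦ sinh (s * c) / sinh c) (Ioi 0) := by
  have hF : ∀ c ∈ Ioi (0 : ℝ), HasDerivAt (fun c ↦ sinh (s * c) / sinh c)
      ((cosh (s * c) * s * sinh c - sinh (s * c) * cosh c) / sinh c ^ 2) c := fun c hc ↦ by
    have := (((hasDerivAt_id c).const_mul s).sinh).div (hasDerivAt_sinh c) (sinh_pos_iff.2 hc).ne'
    simp only [id, mul_one] at this
    exact this
  refine antitoneOn_of_deriv_nonpos (convex_Ioi 0)
    (fun c hc ↦ (hF c hc).continuousAt.continuousWithinAt)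
    (fun c hc ↦ (hF c (interior_subset hc)).differentiableAt.differentiableWithinAt)
    fun c hc ↦ ?_
  rw [interior_Ioi] at hc
  rw [(hF c hc).deriv]
  refine div_nonpos_of_nonpos_of_nonneg ?_ (sq_nonneg _)
  linarith [mul_cosh_mul_mul_sinh_le hs (le_of_lt hc)]

lemma ofReal_le_sigmaCoeff_of_nonneg {K Np s θ : ℝ} (hK : 0 ≤ K) (hNp : 0 < Np)
    (hs : s ∈ Icc (0 : ℝ) 1) (hθ : 0 ≤ θ) : ENNReal.ofReal s ≤ sigmaCoeff K Np s θ := by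
  unfold sigmaCoeff
  split_ifs with hθ0 hK0 hφ hK0' <;> try exact le_rfl
  · set φ := θ * √(K / Np)
    have hφ0 : 0 < φ := mul_pos (hθ.lt_of_ne' hθ0) (sqrt_pos.2 (div_pos hK0 hNp))
    refine ENNReal.ofReal_le_ofReal ((le_div_iff₀ (sin_pos_of_pos_of_lt_pi hφ0 hφ)).2 ?_)
    exact mul_sin_le_sin_mul hs ⟨hφ0.le, hφ.le⟩
  · exact le_top
  · exact absurd (hK.lt_of_ne' hK0') hK0

lemma sigmaCoeff_of_neg {K Np s θ : ℝ} (hK : K < 0) (hθ : θ ≠ 0) :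
    sigmaCoeff K Np s θ =
      ENNReal.ofReal (sinh (s * (θ * √(-K / Np))) / sinh (θ * √(-K / Np))) := by
  simp [sigmaCoeff, hθ, hK.not_gt, hK.ne]

lemma sigmaCoeff_antitoneOn_of_neg {K Np s : ℝ} (hK : K < 0) (hNp : 0 < Np)
    (hs : s ∈ Icc (0 : ℝ) 1) : AntitoneOn (sigmaCoeff K Np s) (Ioi 0) := by
  intro θ hθ θ' hθ' hle
  have hl : 0 < √(-K / Np) := sqrt_pos.2 (div_pos (neg_pos.2 hK) hNp)
  rw [sigmaCoeff_of_neg hK hθ.out.ne', sigmaCoeff_of_neg hK hθ'.out.ne']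
  exact ENNReal.ofReal_le_ofReal (sinh_mul_div_sinh_antitoneOn hs (mul_pos hθ hl)
    (mul_pos hθ' hl) (mul_le_mul_of_nonneg_right hle hl.le))

lemma sigmaCoeff_toReal_pos_of_neg {K Np s θ : ℝ} (hK : K < 0) (hNp : 0 < Np) (hs : 0 < s)
    (hθ : 0 < θ) : 0 < (sigmaCoeff K Np s θ).toReal := by
  have hc : 0 < θ * √(-K / Np) := mul_pos hθ (sqrt_pos.2 (div_pos (neg_pos.2 hK) hNp))
  rw [sigmaCoeff_of_neg hK hθ.ne', ENNReal.toReal_ofReal']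
  exact lt_max_of_lt_left (div_pos (sinh_pos_iff.2 (mul_pos hs hc)) (sinh_pos_iff.2 hc))

lemma continuous_sigmaCoeff_toReal_of_neg {K Np θ : ℝ} (hK : K < 0) (hθ : θ ≠ 0) :
    Continuous fun s ↦ (sigmaCoeff K Np s θ).toReal := by
  simp_rw [sigmaCoeff_of_neg hK hθ, ENNReal.toReal_ofReal']
  fun_prop

lemma IsCDDensity.rpow_mul_le {K N : ℝ} (hN : 1 < N) {h : ℝ → ℝ} {I : Set ℝ}
    (hCD : IsCDDensity K N h I) (hI : Convex ℝ I) {x₀ x₁ t r : ℝ} (hx₀ : x₀ ∈ I)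
    (hx₁ : x₁ ∈ I) (ht : t ∈ Icc (0 : ℝ) 1) (hr : 0 ≤ r)
    (hσ : ENNReal.ofReal r ≤ sigmaCoeff K (N - 1) (1 - t) |x₁ - x₀|) :
    r ^ (N - 1) * h x₀ ≤ h (t * x₁ + (1 - t) * x₀) := by
  have hN1 : 0 < N - 1 := sub_pos.2 hN
  have hy : t * x₁ + (1 - t) * x₀ ∈ I := by
    simpa using hI hx₁ hx₀ ht.1 (sub_nonneg.2 ht.2) (add_sub_cancel t 1)
  have hx₀0 := hCD.1 x₀ hx₀
  have hy0 := hCD.1 _ hy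
  have hCD' := hCD.2 x₀ hx₀ x₁ hx₁ t ht
  rw [one_div] at hCD'
  have hroot : r * h x₀ ^ (N - 1)⁻¹ ≤ h (t * x₁ + (1 - t) * x₀) ^ (N - 1)⁻¹ := by
    rw [← ENNReal.ofReal_le_ofReal_iff (by positivity), ENNReal.ofReal_mul hr]
    exact (mul_le_mul_left hσ _).trans (le_add_self.trans hCD')
  rwa [le_rpow_inv_iff_of_pos (by positivity) hy0 hN1, mul_rpow hr (by positivity),
    rpow_inv_rpow hx₀0 hN1.ne'] at hroot

/-- Along every segment `[x, z] ⊆ (a, b)`, `h` is bounded below by `h x` times the profile `g`,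
read off at the relative distance to the far endpoint `z`. -/
def DominatesProfile (h g : ℝ → ℝ) (a b : ℝ) : Prop :=
  ∀ x ∈ Ioo a b, ∀ z ∈ Ioo a b, x ≠ z → ∀ t ∈ Icc (0 : ℝ) 1,
    h x * g (1 - t) ≤ h (t * z + (1 - t) * x)

lemma IsCDDensity.dominatesProfile {K N a b : ℝ} (hN : 1 < N) {h : ℝ → ℝ}
    (hCD : IsCDDensity K N h (Ioo a b)) {φ : ℝ → ℝ}
    (hφ0 : ∀ s ∈ Icc (0 : ℝ) 1, 0 ≤ φ s)
    (hφ : ∀ θ ∈ Ioc 0 (b - a), ∀ s ∈ Icc (0 : ℝ) 1,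
      ENNReal.ofReal (φ s) ≤ sigmaCoeff K (N - 1) s θ) :
    DominatesProfile h (fun s ↦ φ s ^ (N - 1)) a b := by
  intro x hx z hz hxz t ht
  have hs : 1 - t ∈ Icc (0 : ℝ) 1 := ⟨sub_nonneg.2 ht.2, sub_le_self 1 ht.1⟩
  have hθ : |z - x| ∈ Ioc 0 (b - a) := ⟨abs_pos.2 (sub_ne_zero.2 hxz.symm),
    abs_sub_le_iff.2 ⟨by linarith [hz.2, hx.1], by linarith [hx.2, hz.1]⟩⟩
  rw [mul_comm]
  exact hCD.rpow_mul_le hN (convex_Ioo a b) hx hz ht (hφ0 _ hs) (hφ _ hθ _ hs)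

lemma integral_comp_sub_div_sub (g : ℝ → ℝ) {x z : ℝ} (hxz : x ≠ z) :
    ∫ y in x..z, g ((z - y) / (z - x)) = (z - x) * ∫ u in (0 : ℝ)..1, g u := by
  simp_rw [sub_div]
  rw [intervalIntegral.integral_comp_sub_div g (sub_ne_zero.2 hxz.symm), sub_self, ← sub_div,
    div_self (sub_ne_zero.2 hxz.symm), smul_eq_mul]

namespace DominatesProfile

variable {h g : ℝ → ℝ} {a b : ℝ}

lemma comp_neg (hd : DominatesProfile h g a b) :
    DominatesProfile (fun y ↦ h (-y)) g (-b) (-a) := by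
  intro x hx z hz hxz t ht
  convert hd (-x) ⟨by linarith [hx.2], by linarith [hx.1]⟩ (-z)
    ⟨by linarith [hz.2], by linarith [hz.1]⟩ (neg_injective.ne hxz) t ht using 2
  ring

/-- `b` itself is not admissible as far endpoint; the bound there is a limit. -/
lemma mul_le_of_mem_Ioo (hd : DominatesProfile h g a b) (hg : Continuous g) {x y : ℝ}
    (hx : x ∈ Ioo a b) (hy : y ∈ Ioo x b) : h x * g ((b - y) / (b - x)) ≤ h y := by
  have hev : ∀ᶠ z in 𝓝[<] b, h x * g ((z - y) / (z - x)) ≤ h y := by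
    filter_upwards [Ioo_mem_nhdsLT hy.2] with z hz
    have hzx : 0 < z - x := by linarith [hy.1, hz.1]
    have ht : (y - x) / (z - x) ∈ Icc (0 : ℝ) 1 :=
      ⟨div_nonneg (by linarith [hy.1]) hzx.le, (div_le_one hzx).2 (by linarith [hz.1])⟩
    convert hd x hx z ⟨by linarith [hx.1, hy.1, hz.1], hz.2⟩ (sub_pos.1 hzx).ne _ ht using 3 <;>
      field_simp <;> ring
  have hcont : ContinuousAt (fun z ↦ h x * g ((z - y) / (z - x))) b :=
    continuousAt_const.mul (hg.continuousAt.comp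
      ((continuousAt_id.sub continuousAt_const).div (continuousAt_id.sub continuousAt_const)
        (sub_ne_zero.2 (hy.1.trans hy.2).ne')))
  exact le_of_tendsto (hcont.tendsto.mono_left nhdsWithin_le_nhds) hev

lemma mul_integral_le_intervalIntegral (hd : DominatesProfile h g a b) (hg : Continuous g)
    {x : ℝ} (hx : x ∈ Ioo a b) (hh : IntervalIntegrable h volume x b) :
    (b - x) * (h x * ∫ u in (0 : ℝ)..1, g u) ≤ ∫ y in x..b, h y := by
  calc (b - x) * (h x * ∫ u in (0 : ℝ)..1, g u)
      = ∫ y in x..b, h x * g ((b - y) / (b - x)) := by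
        rw [intervalIntegral.integral_const_mul, integral_comp_sub_div_sub g hx.2.ne]
        ring
    _ ≤ ∫ y in x..b, h y :=
        integral_mono_on_of_le_Ioo hx.2.le
          ((by fun_prop : Continuous _).intervalIntegrable _ _) hh
          fun y hy ↦ hd.mul_le_of_mem_Ioo hg hx hy

lemma mul_le_setIntegral (hd : DominatesProfile h g a b) (hg : Continuous g)
    (hh : IntegrableOn h (Ioo a b)) {x : ℝ} (hx : x ∈ Ioo a b) :
    (b - a) * (h x * ∫ u in (0 : ℝ)..1, g u) ≤ ∫ y in Ioo a b, h y := by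
  have hab : a ≤ b := (hx.1.trans hx.2).le
  have hII : IntervalIntegrable h volume a b :=
    (intervalIntegrable_iff_integrableOn_Ioo_of_le hab).2 hh
  have hxmem : x ∈ uIcc a b := mem_uIcc_of_le hx.1.le hx.2.le
  have hIIl := hII.mono_set (uIcc_subset_uIcc left_mem_uIcc hxmem)
  have hIIr := hII.mono_set (uIcc_subset_uIcc hxmem right_mem_uIcc)
  have hright := hd.mul_integral_le_intervalIntegral hg hx hIIr
  have hleft : (x - a) * (h x * ∫ u in (0 : ℝ)..1, g u) ≤ ∫ y in a..x, h y := by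
    have := hd.comp_neg.mul_integral_le_intervalIntegral hg (x := -x)
      ⟨neg_lt_neg hx.2, neg_lt_neg hx.1⟩ ((IntervalIntegrable.iff_comp_neg).1 hIIl.symm)
    simpa [intervalIntegral.integral_comp_neg, neg_add_eq_sub] using this
  rw [← integral_Ioc_eq_integral_Ioo, ← intervalIntegral.integral_of_le hab,
    ← integral_add_adjacent_intervals hIIl hIIr]
  linarith

end DominatesProfile

theorem statement19_general (K N a b : ℝ) (hN : 1 < N)
    (h : ℝ → ℝ) (hCD : IsCDDensity K N h (Set.Ioo a b))
    (hint : ∫ x in Set.Ioo a b, h x = 1) :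
    (0 ≤ K → ∀ x ∈ Set.Ioo a b, h x ≤ N / (b - a)) ∧
      (K < 0 → ∀ x ∈ Set.Ioo a b,
        h x ≤ (b - a)⁻¹ *
          (∫ t in (0:ℝ)..1, (sigmaCoeff K (N - 1) t (b - a)).toReal ^ (N - 1))⁻¹) := by
  have hN1 : 0 < N - 1 := sub_pos.2 hN
  have hh : IntegrableOn h (Ioo a b) := Integrable.of_integral_ne_zero (hint ▸ one_ne_zero)
  refine ⟨fun hK x hx ↦ ?_, fun hK x hx ↦ ?_⟩ <;>
    have hab : 0 < b - a := by linarith [hx.1, hx.2]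
  · have hd : DominatesProfile h (fun s ↦ s ^ (N - 1)) a b :=
      hCD.dominatesProfile hN (fun s hs ↦ hs.1)
        fun θ hθ s hs ↦ ofReal_le_sigmaCoeff_of_nonneg hK hN1 hs hθ.1.le
    have hbound := hd.mul_le_setIntegral (continuous_id.rpow_const fun _ ↦ Or.inr hN1.le) hh hx
    rw [hint, integral_rpow (Or.inl (by linarith)), sub_add_cancel, one_rpow,
      zero_rpow (by linarith)] at hbound
    rw [le_div_iff₀ hab]
    field_simp at hbound
    linarith
  · set φ : ℝ → ℝ := fun s ↦ (sigmaCoeff K (N - 1) s (b - a)).toReal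
    have hd : DominatesProfile h (fun s ↦ φ s ^ (N - 1)) a b :=
      hCD.dominatesProfile hN (fun s _ ↦ ENNReal.toReal_nonneg) fun θ hθ s hs ↦
        ENNReal.ofReal_toReal_le.trans
          (sigmaCoeff_antitoneOn_of_neg hK hN1 hs hθ.1 (hθ.1.trans_le hθ.2) hθ.2)
    have hφ : Continuous fun s ↦ φ s ^ (N - 1) :=
      (continuous_sigmaCoeff_toReal_of_neg hK hab.ne').rpow_const fun _ ↦ Or.inr hN1.le
    have hJ : 0 < ∫ s in (0 : ℝ)..1, φ s ^ (N - 1) :=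
      intervalIntegral_pos_of_pos_on (hφ.intervalIntegrable 0 1)
        (fun s hs ↦ rpow_pos_of_pos (sigmaCoeff_toReal_pos_of_neg hK hN1 hs.1 hab) _) one_pos
    have hbound := hd.mul_le_setIntegral hφ hh hx
    rw [hint] at hbound
    rw [← mul_inv, ← one_div, le_div_iff₀ (mul_pos hab hJ)]
    linarith

/-- A-priori sup bound on a `CD(K,N)` probability density on a finite interval `(a,b)`:
if `K ≥ 0` then `h ≤ N/(b-a)` on `(a,b)`, and if `K < 0` then
`h ≤ (b-a)⁻¹·(∫₀¹ (σ^{(t)}_{K,N-1}(b-a))^{N-1} dt)⁻¹` on `(a,b)`. -/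
theorem statement19 (K N a b : ℝ) (hN : 1 < N) (hab : a < b)
    (h : ℝ → ℝ) (hCD : IsCDDensity K N h (Set.Ioo a b))
    (hint : ∫ x in Set.Ioo a b, h x = 1) :
    (0 ≤ K → ∀ x ∈ Set.Ioo a b, h x ≤ N / (b - a)) ∧
      (K < 0 → ∀ x ∈ Set.Ioo a b,
        h x ≤ (b - a)⁻¹ *
          (∫ t in (0:ℝ)..1, (sigmaCoeff K (N - 1) t (b - a)).toReal ^ (N - 1))⁻¹) :=
  statement19_general K N a b hN h hCD hint
end
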